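/- arXiv:2511.21894 — 2 statements merged into one kernel-verified Lean document; each statement's English description precedes it below -/
import Mathlib

section
/- For every positive integer m, the set (m,m,0)·B_ω^{F^n}·(m,m,0) equals the image of B_ω^{F^n} under λ^m, i.e., it equals {(i,j,p) : i ≥ m, j ≥ m, p ∈ {0,…,n-1}}. -/
/-- The bicyclic-extension semigroup operation on `ℕ × ℕ × Fin n`. -/
def Bmul (n : ℕ) (x y : ℕ × ℕ × Fin n) : ℕ × ℕ × Fin n :=
  if x.2.1 ≤ y.1 then
    (x.1 - x.2.1 + y.1, y.2.1,
      ⟨max (x.2.2.1 - (y.1 - x.2.1)) y.2.2.1, by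
        have h1 := x.2.2.2; have h2 := y.2.2.2; omega⟩)
  else
    (x.1, x.2.1 - y.1 + y.2.1,
      ⟨max x.2.2.1 (y.2.2.1 - (x.2.1 - y.1)), by
        have h1 := x.2.2.2; have h2 := y.2.2.2; omega⟩)

/-- The shift endomorphism λ. -/
def lamB (n : ℕ) (x : ℕ × ℕ × Fin n) : ℕ × ℕ × Fin n :=
  (x.1 + 1, x.2.1 + 1, x.2.2)

/-- The endomorphism ϖ_n. -/
def varpiB (n : ℕ) (x : ℕ × ℕ × Fin n) : ℕ × ℕ × Fin n :=
  (x.1 + x.2.2.1, x.2.1 + x.2.2.1,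
    ⟨n - 1 - x.2.2.1, by have := x.2.2.2; omega⟩)

/-- The endomorphism α_[k] of B_ω^{F³}. -/
def alphaB (k : ℕ) (x : ℕ × ℕ × Fin 3) : ℕ × ℕ × Fin 3 :=
  if x.2.2.1 = 2 then (k * (x.1 + 1) - 1, k * (x.2.1 + 1) - 1, x.2.2)
  else (k * x.1, k * x.2.1, x.2.2)

/-! Multiplying by the idempotent `(m, m, 0)` on the left raises the first coordinate to at
least `m` and fixes elements whose first coordinate is already at least `m`; symmetrically on
the right for the second coordinate, while right multiplication never lowers the first
coordinate. Hence `(m, m, 0) · x · (m, m, 0)` ranges exactly over the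
elements with both coordinates at least `m`, which is the image of `λ^m`. -/

section Bmul

variable {n : ℕ}

theorem fst_le_fst_Bmul (x y : ℕ × ℕ × Fin n) : x.1 ≤ (Bmul n x y).1 := by
  unfold Bmul
  split_ifs <;> dsimp only <;> omega

theorem le_fst_Bmul_idem_left (hn : 0 < n) (m : ℕ) (x : ℕ × ℕ × Fin n) :
    m ≤ (Bmul n (m, m, ⟨0, hn⟩) x).1 := by
  unfold Bmul
  split_ifs <;> dsimp only at * <;> omega

theorem le_snd_Bmul_idem_right (hn : 0 < n) (m : ℕ) (x : ℕ × ℕ × Fin n) :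
    m ≤ (Bmul n x (m, m, ⟨0, hn⟩)).2.1 := by
  unfold Bmul
  split_ifs <;> dsimp only at * <;> omega

theorem Bmul_idem_left_of_le (hn : 0 < n) {m : ℕ} {x : ℕ × ℕ × Fin n} (h : m ≤ x.1) :
    Bmul n (m, m, ⟨0, hn⟩) x = x := by
  obtain ⟨i, j, p⟩ := x
  simp only [Bmul] at h ⊢
  rw [if_pos h]
  simp only [Prod.mk.injEq, Nat.zero_sub, Nat.zero_max, and_true]
  omega

/-- `Bmul` evaluates `i₁ - j₁ + i₂` with truncated subtraction, so `(i, m, p) · (m, m, 0)` is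
`(m, m, p)` when `i < m`. -/
theorem Bmul_idem_right_of_le (hn : 0 < n) {m : ℕ} {x : ℕ × ℕ × Fin n} (h₁ : m ≤ x.1)
    (h₂ : m ≤ x.2.1) : Bmul n x (m, m, ⟨0, hn⟩) = x := by
  obtain ⟨i, j, p⟩ := x
  simp only [Bmul] at h₁ h₂ ⊢
  split_ifs <;>
    simp only [Prod.mk.injEq, Fin.ext_iff, Nat.zero_sub, Nat.max_zero, true_and, and_true] <;>
    omega

end Bmul

theorem lamB_iterate_apply (n m : ℕ) (x : ℕ × ℕ × Fin n) :
    (lamB n)^[m] x = (x.1 + m, x.2.1 + m, x.2.2) := by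
  induction m with
  | zero => rfl
  | succ k ih => rw [Function.iterate_succ_apply', ih, lamB]; rfl

theorem range_lamB_iterate (n m : ℕ) :
    Set.range ((lamB n)^[m]) = {z : ℕ × ℕ × Fin n | m ≤ z.1 ∧ m ≤ z.2.1} := by
  ext ⟨i, j, p⟩
  simp only [Set.mem_range, Set.mem_ofPred_eq, lamB_iterate_apply]
  constructor
  · rintro ⟨x, hx⟩
    simp only [Prod.mk.injEq] at hx
    omega
  · rintro ⟨hi, hj⟩
    exact ⟨(i - m, j - m, p), by simp only [Prod.mk.injEq, and_true]; omega⟩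

theorem sandwich_eq_lam_image_general (n m : ℕ) (hn : 0 < n) :
    {z : ℕ × ℕ × Fin n |
        ∃ x, z = Bmul n (Bmul n (m, m, ⟨0, hn⟩) x) (m, m, ⟨0, hn⟩)} =
      Set.range ((lamB n)^[m]) ∧
    Set.range ((lamB n)^[m]) = {z : ℕ × ℕ × Fin n | m ≤ z.1 ∧ m ≤ z.2.1} := by
  rw [range_lamB_iterate]
  refine ⟨Set.Subset.antisymm ?_ ?_, rfl⟩
  · rintro _ ⟨x, rfl⟩
    exact ⟨(le_fst_Bmul_idem_left hn m x).trans (fst_le_fst_Bmul _ _),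
      le_snd_Bmul_idem_right hn m _⟩
  · rintro z ⟨hz₁, hz₂⟩
    exact ⟨z, by rw [Bmul_idem_left_of_le hn hz₁, Bmul_idem_right_of_le hn hz₁ hz₂]⟩

/-- `(m,m,0) · B_ω^{F^n} · (m,m,0)` equals the image of `λ^m`, which is the set of
triples with both first coordinates at least `m`. -/
theorem sandwich_eq_lam_image (n m : ℕ) (hn : 0 < n) (hm : 0 < m) :
    {z : ℕ × ℕ × Fin n |
        ∃ x, z = Bmul n (Bmul n (m, m, ⟨0, hn⟩) x) (m, m, ⟨0, hn⟩)} =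
      Set.range ((lamB n)^[m]) ∧
    Set.range ((lamB n)^[m]) = {z : ℕ × ℕ × Fin n | m ≤ z.1 ∧ m ≤ z.2.1} :=
  sandwich_eq_lam_image_general n m hn
end

section
/- For every positive integer k, for all (i,j,p) in B_ω^{F³}: (((i,j,p)ϖ₃)α_[k])ϖ₃ = ((i,j,p)α_[k])λ^{k+1}, i.e., ϖ₃ ∘ α_[k] ∘ ϖ₃ = α_[k] ∘ λ^{k+1}. -/
/-- `ϖ₃ ∘ α_[k] ∘ ϖ₃ = α_[k] ∘ λ^{k+1}` (composition left to right). -/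
theorem varpi_alpha_varpi (k : ℕ) (hk : 0 < k) (x : ℕ × ℕ × Fin 3) :
    varpiB 3 (alphaB k (varpiB 3 x)) = (lamB 3)^[k + 1] (alphaB k x) := by
  obtain ⟨i, j, p⟩ := x
  rw [lamB_iterate_apply]
  -- `ϖ₃` swaps levels 0 and 2; there `hk` makes the truncated `k * (m + 1) - 1` exact.
  fin_cases p <;> simp [varpiB, alphaB, mul_add] <;> omega
end
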